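/- arXiv:1607.01458 — 7 statements merged into one kernel-verified Lean document; each statement's English description precedes it below -/
import Mathlib

section
/- Let (X, 𝒜) be a measurable space, μ₀ a probability measure on X, and q a Markov kernel from X to X. Set η₀ = μ₀ ⊗ₖ q and let η₀⊥ be the pushforward of η₀ under the swap map (u, v) ↦ (v, u). Assume η₀⊥ is absolutely continuous with respect to η₀ with density r₀(u, v). Let Φ : X → ℝ be measurable with exp(−Φ) integrable with respect to μ₀, and let μ be the probability measure with dμ/dμ₀ = exp(−Φ)/Z where Z = ∫ exp(−Φ) dμ₀. Set η = μ ⊗ₖ q and let η⊥ be the pushforward of η under the swap map. Then η⊥ is absolutely continuous with respect to η, and for η-almost every (u, v), (dη⊥/dη)(u, v) = exp(Φ(u) − Φ(v)) r₀(u, v). -/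
open MeasureTheory ProbabilityTheory


lemma map_swap_withDensity {X : Type*} [MeasurableSpace X]
    (ν : Measure X) (q : Kernel X X) [SFinite ν] [IsSFiniteKernel q]
    (g : X × X → ENNReal) (hg : Measurable g) :
    Measure.map Prod.swap ((ν ⊗ₘ q).withDensity g) =
      (Measure.map Prod.swap (ν ⊗ₘ q)).withDensity (fun p => g p.swap) := by
  ext s hs
  rw [Measure.map_apply measurable_swap hs, withDensity_apply _ (measurable_swap hs),
    withDensity_apply _ hs]
  rw [setLIntegral_map hs (show Measurable fun p : X × X => g p.swap from
    hg.comp measurable_swap) measurable_swap]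
  simp

lemma withDensity_compProd {X : Type*} [MeasurableSpace X]
    (ν : Measure X) (q : Kernel X X) [SFinite ν] [IsSFiniteKernel q]
    (f : X → ENNReal) (hf : Measurable f) [SFinite (ν.withDensity f)] :
    (ν.withDensity f) ⊗ₘ q = (ν ⊗ₘ q).withDensity (fun p => f p.1) := by
  ext s hs
  rw [Measure.compProd_apply hs, withDensity_apply _ hs,
    lintegral_withDensity_eq_lintegral_mul _ hf (Kernel.measurable_kernel_prodMk_left hs)]
  rw [← lintegral_indicator hs, Measure.lintegral_compProd]
  · congr 1 with a
    have : ∀ b, s.indicator (fun p => f p.1) (a, b) =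
        (Prod.mk a ⁻¹' s).indicator (fun _ => f a) b := by
      intro b
      rfl
    simp_rw [this]
    rw [lintegral_indicator (measurable_prodMk_left hs), setLIntegral_const]
    simp [mul_comm]
  · exact (hf.comp measurable_fst).indicator hs

/-- Abstract version of the pCN acceptance-ratio computation: if the swap of
`η₀ = μ₀ ⊗ₘ q` has density `r₀` with respect to `η₀`, and `μ` has density
`exp(−Φ)/Z` with respect to `μ₀`, then the swap of `η = μ ⊗ₘ q` is absolutely
continuous with respect to `η` with density `(u,v) ↦ exp(Φ(u) − Φ(v)) r₀(u,v)`. -/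
theorem swap_compProd_rnDeriv_of_density
    {X : Type*} [MeasurableSpace X]
    (μ₀ : Measure X) [IsProbabilityMeasure μ₀]
    (q : Kernel X X) [IsMarkovKernel q]
    (r₀ : X × X → ENNReal) (hr₀ : Measurable r₀)
    (h₀ : Measure.map Prod.swap (μ₀ ⊗ₘ q) = (μ₀ ⊗ₘ q).withDensity r₀)
    (Φ : X → ℝ) (hΦ : Measurable Φ)
    (hint : Integrable (fun u => Real.exp (-Φ u)) μ₀)
    (Z : ℝ) (hZ : Z = ∫ u, Real.exp (-Φ u) ∂μ₀)
    (μ : Measure X)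
    (hμ : μ = μ₀.withDensity fun u => ENNReal.ofReal (Real.exp (-Φ u) / Z)) :
    Measure.map Prod.swap (μ ⊗ₘ q) ≪ (μ ⊗ₘ q) ∧
      (Measure.map Prod.swap (μ ⊗ₘ q)).rnDeriv (μ ⊗ₘ q) =ᵐ[μ ⊗ₘ q]
        fun p => ENNReal.ofReal (Real.exp (Φ p.1 - Φ p.2)) * r₀ p := by
  have hZpos : 0 < Z := hZ ▸ integral_exp_pos hint
  set f : X → ENNReal := fun u => ENNReal.ofReal (Real.exp (-Φ u) / Z) with hf_def
  have hf : Measurable f :=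
    ((Real.measurable_exp.comp hΦ.neg).div_const Z).ennreal_ofReal
  have hμprob : IsProbabilityMeasure μ := by
    constructor
    rw [hμ, withDensity_apply _ MeasurableSet.univ, setLIntegral_univ,
      ← ofReal_integral_eq_lintegral_ofReal (hint.div_const Z)
        (Filter.Eventually.of_forall fun u => by positivity),
      integral_div, ← hZ, div_self hZpos.ne']
    simp
  haveI : IsProbabilityMeasure (μ₀.withDensity f) := hμ ▸ hμprob
  set g : X × X → ENNReal := fun p => ENNReal.ofReal (Real.exp (Φ p.1 - Φ p.2)) * r₀ p
    with hg_def
  have hg : Measurable g :=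
    (Real.measurable_exp.comp
      ((hΦ.comp measurable_fst).sub (hΦ.comp measurable_snd))).ennreal_ofReal.mul hr₀
  have key1 : μ ⊗ₘ q = (μ₀ ⊗ₘ q).withDensity (fun p => f p.1) := by
    rw [hμ]
    exact withDensity_compProd μ₀ q f hf
  have key2 : Measure.map Prod.swap (μ ⊗ₘ q) =
      (μ₀ ⊗ₘ q).withDensity (r₀ * fun p => f p.2) := by
    rw [key1, map_swap_withDensity μ₀ q (fun p => f p.1) (show Measurable fun p : X × X => f p.1 from hf.comp measurable_fst), h₀]
    simp only [Prod.fst_swap]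
    rw [← withDensity_mul _ hr₀ (show Measurable fun p : X × X => f p.2 from hf.comp measurable_snd)]
  have key3 : (fun p : X × X => f p.1) * g = r₀ * fun p => f p.2 := by
    funext p
    have h1 : ENNReal.ofReal (Real.exp (-Φ p.1) / Z) *
        ENNReal.ofReal (Real.exp (Φ p.1 - Φ p.2)) = ENNReal.ofReal (Real.exp (-Φ p.2) / Z) := by
      rw [← ENNReal.ofReal_mul (by positivity)]
      congr 1
      rw [div_mul_eq_mul_div, ← Real.exp_add]
      ring_nf
    simp only [Pi.mul_apply, hf_def, hg_def]
    rw [← mul_assoc, h1, mul_comm]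
  have key : Measure.map Prod.swap (μ ⊗ₘ q) = (μ ⊗ₘ q).withDensity g := by
    rw [key2, ← key3, withDensity_mul _ (show Measurable fun p : X × X => f p.1 from hf.comp measurable_fst) hg, ← key1]
  rw [key]
  exact ⟨withDensity_absolutelyContinuous _ _, Measure.rnDeriv_withDensity _ hg⟩
end

section
/- Let J, K be positive integers, let α₁, …, α_{J+K} > 0, and let μ₀ be the Gaussian measure on ℝ^{J+K} with mean zero and covariance D = diag(α₁, …, α_{J+K}). Fix β ∈ (0, 1) and a symmetric positive definite J × J matrix Σ. Let q be the Markov kernel on ℝ^{J+K} where, given u, the proposal v has components v_i = u_i + β w_i for i = 1, …, J with (w₁, …, w_J) ∼ N(0, Σ), and v_i = √(1 − β²) u_i + β w_i for i = J+1, …, J+K with w_i ∼ N(0, α_i), all independent. Let Φ : ℝ^{J+K} → ℝ be measurable with exp(−Φ) integrable with respect to μ₀, and let μ be the probability measure with dμ/dμ₀ = exp(−Φ)/Z, Z = ∫ exp(−Φ) dμ₀. Set η = μ ⊗ₖ q and let η⊥ be the pushforward of η under the swap map (u, v) ↦ (v, u). Then η⊥ is absolutely continuous with respect to η, and for η-almost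 every (u, v), (dη⊥/dη)(u, v) = exp( Φ(u) − Φ(v) + (1/2) ∑_{i=1}^{J} (u_i² − v_i²)/α_i ). -/
open MeasureTheory ProbabilityTheory Matrix

/-- The Lebesgue density of the Gaussian `N(m, S)` on `ℝ^d`. -/
noncomputable def gaussianPDF (d : ℕ) (m : Fin d → ℝ) (S : Matrix (Fin d) (Fin d) ℝ)
    (x : Fin d → ℝ) : ℝ :=
  (2 * Real.pi) ^ (-(d : ℝ) / 2) * S.det ^ (-(1 : ℝ) / 2) *
    Real.exp (-(1 / 2) * ((x - m) ⬝ᵥ (S⁻¹ *ᵥ (x - m))))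

/-- The Gaussian measure `N(m, S)` on `ℝ^d`, defined through its Lebesgue density. -/
noncomputable def gaussianMeasure (d : ℕ) (m : Fin d → ℝ) (S : Matrix (Fin d) (Fin d) ℝ) :
    Measure (Fin d → ℝ) :=
  volume.withDensity fun x => ENNReal.ofReal (gaussianPDF d m S x)

/-- The block-diagonal covariance of the hybrid proposal: `Σ` on the first `J`
coordinates and `diag (α_{J+1}, …, α_{J+K})` on the remaining `K` coordinates. -/
noncomputable def hybridCov (J K : ℕ) (α : Fin (J + K) → ℝ)
    (Sm : Matrix (Fin J) (Fin J) ℝ) : Matrix (Fin (J + K)) (Fin (J + K)) ℝ :=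
  Matrix.of fun i j =>
    if hi : (i : ℕ) < J then
      (if hj : (j : ℕ) < J then Sm ⟨i, hi⟩ ⟨j, hj⟩ else 0)
    else (if i = j then α i else 0)

/-- The mean of the hybrid proposal started at `u`: the first `J` coordinates are
left unchanged (adaptive random walk) while the remaining ones are scaled by
`√(1 - β²)` (pCN). -/
noncomputable def hybridMean (J K : ℕ) (β : ℝ) (u : Fin (J + K) → ℝ) : Fin (J + K) → ℝ :=
  fun i => if (i : ℕ) < J then u i else Real.sqrt (1 - β ^ 2) * u i

/-! With respect to Lebesgue measure on the product, `η = μ ⊗ₘ q` has density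
`π(u) k(u, v)` and its swap has density `π(v) k(v, u)`, where `π ∝ exp(-Φ) · N(0, D)` and `k(u, ·)`
is the proposal density; so the Radon–Nikodym derivative is their ratio, a pointwise computation
with Gaussian exponents. The proposal covariance `β² · diag(Σ, α_{J+1}, …, α_{J+K})` inverts
blockwise. On the random-walk block the proposal term is symmetric in `u ↔ v`, so only the prior
term `∑_{i<J} (u_i² - v_i²)/α_i` survives. Each pCN coordinate is reversible for the prior:
`v² + (u - s v)²/β² = u² + (v - s u)²/β²` when `s² = 1 - β²`. -/

open scoped ENNReal

lemma Fin.castAdd_ne_natAdd {m n : ℕ} (i : Fin m) (j : Fin n) : castAdd n i ≠ natAdd m j := by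
  simp [Fin.ext_iff]; omega

section HybridCov

variable {J K : ℕ}

lemma hybridCov_mul_hybridCov (α α' : Fin (J + K) → ℝ) (A B : Matrix (Fin J) (Fin J) ℝ) :
    hybridCov J K α A * hybridCov J K α' B = hybridCov J K (α * α') (A * B) := by
  ext i j
  refine Fin.addCases (fun i => ?_) (fun i => ?_) i <;>
    refine Fin.addCases (fun j => ?_) (fun j => ?_) j <;>
    simp +contextual [hybridCov, mul_apply, Fin.sum_univ_add, (Fin.castAdd_ne_natAdd _ _).symm,
      Fin.natAdd_inj]

lemma hybridCov_one : hybridCov J K 1 1 = 1 := by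
  ext i j
  refine Fin.addCases (fun i => ?_) (fun i => ?_) i <;>
    refine Fin.addCases (fun j => ?_) (fun j => ?_) j <;>
    simp [hybridCov, one_apply, Fin.castAdd_ne_natAdd, (Fin.castAdd_ne_natAdd _ _).symm,
      Fin.natAdd_inj, Fin.val_inj]

lemma dotProduct_hybridCov_mulVec (α : Fin (J + K) → ℝ) (A : Matrix (Fin J) (Fin J) ℝ)
    (w : Fin (J + K) → ℝ) :
    w ⬝ᵥ (hybridCov J K α A *ᵥ w) = (w ∘ Fin.castAdd K) ⬝ᵥ (A *ᵥ (w ∘ Fin.castAdd K)) +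
      ∑ k : Fin K, α (Fin.natAdd J k) * w (Fin.natAdd J k) ^ 2 := by
  simp [hybridCov, dotProduct, mulVec, Fin.sum_univ_add, sq, mul_left_comm]

lemma det_hybridCov (α : Fin (J + K) → ℝ) (A : Matrix (Fin J) (Fin J) ℝ) :
    (hybridCov J K α A).det = A.det * ∏ k : Fin K, α (Fin.natAdd J k) := by
  have : hybridCov J K α A = reindex finSumFinEquiv finSumFinEquiv
      (fromBlocks A 0 0 (diagonal fun k => α (Fin.natAdd J k))) := by
    ext i j
    refine Fin.addCases (fun i => ?_) (fun i => ?_) i <;>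
      refine Fin.addCases (fun j => ?_) (fun j => ?_) j <;>
      simp [hybridCov, diagonal_apply, (Fin.castAdd_ne_natAdd _ _).symm, Fin.natAdd_inj]
  rw [this, det_reindex_self, det_fromBlocks_zero₂₁, det_diagonal]

lemma smul_hybridCov (c : ℝ) (α : Fin (J + K) → ℝ) (A : Matrix (Fin J) (Fin J) ℝ) :
    c • hybridCov J K α A = hybridCov J K (c • α) (c • A) := by
  ext i j
  refine Fin.addCases (fun i => ?_) (fun i => ?_) i <;>
    refine Fin.addCases (fun j => ?_) (fun j => ?_) j <;>
    simp [hybridCov, Fin.natAdd_inj, (Fin.castAdd_ne_natAdd _ _).symm]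

lemma inv_hybridCov {α : Fin (J + K) → ℝ} (hα : ∀ i, α i ≠ 0) {A : Matrix (Fin J) (Fin J) ℝ}
    (hA : IsUnit A.det) : (hybridCov J K α A)⁻¹ = hybridCov J K α⁻¹ A⁻¹ := by
  refine inv_eq_right_inv ?_
  rw [hybridCov_mul_hybridCov, mul_nonsing_inv _ hA, ← hybridCov_one]
  congr
  exact funext fun i => mul_inv_cancel₀ (hα i)

end HybridCov

lemma dotProduct_inv_diagonal_mulVec {n : Type*} [Fintype n] [DecidableEq n] {α : n → ℝ}
    (hα : ∀ i, α i ≠ 0) (x : n → ℝ) : x ⬝ᵥ ((diagonal α)⁻¹ *ᵥ x) = ∑ i, (α i)⁻¹ * x i ^ 2 := by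
  have : (diagonal α)⁻¹ = diagonal α⁻¹ := by
    refine inv_eq_right_inv ?_
    rw [diagonal_mul_diagonal, ← diagonal_one]
    exact congrArg diagonal (funext fun i => mul_inv_cancel₀ (hα i))
  simp [this, dotProduct, mulVec_diagonal, sq, mul_left_comm]

@[simp]
lemma hybridMean_castAdd {J K : ℕ} (β : ℝ) (x : Fin (J + K) → ℝ) (i : Fin J) :
    hybridMean J K β x (Fin.castAdd K i) = x (Fin.castAdd K i) := by
  simp [hybridMean]

@[simp]
lemma hybridMean_natAdd {J K : ℕ} (β : ℝ) (x : Fin (J + K) → ℝ) (k : Fin K) :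
    hybridMean J K β x (Fin.natAdd J k) = Real.sqrt (1 - β ^ 2) * x (Fin.natAdd J k) := by
  simp [hybridMean]

lemma pCN_sq_balance {b s : ℝ} (hb : b ≠ 0) (hs : s ^ 2 = 1 - b) (x y : ℝ) :
    y ^ 2 + b⁻¹ * (x - s * y) ^ 2 = x ^ 2 + b⁻¹ * (y - s * x) ^ 2 := by
  field_simp
  linear_combination (y ^ 2 - x ^ 2) * hs

lemma hybrid_exponent_balance {J K : ℕ} {α : Fin (J + K) → ℝ} (hα : ∀ i, α i ≠ 0) {β : ℝ}
    (hβ : β ≠ 0) (hβ1 : β ^ 2 ≤ 1) {A : Matrix (Fin J) (Fin J) ℝ} (hA : IsUnit A.det)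
    (u v : Fin (J + K) → ℝ) :
    v ⬝ᵥ ((diagonal α)⁻¹ *ᵥ v) + (u - hybridMean J K β v) ⬝ᵥ
        ((β ^ 2 • hybridCov J K α A)⁻¹ *ᵥ (u - hybridMean J K β v)) +
        ∑ i : Fin (J + K), (if (i : ℕ) < J then (u i ^ 2 - v i ^ 2) / α i else 0) =
      u ⬝ᵥ ((diagonal α)⁻¹ *ᵥ u) + (v - hybridMean J K β u) ⬝ᵥ
        ((β ^ 2 • hybridCov J K α A)⁻¹ *ᵥ (v - hybridMean J K β u)) := by
  have hβ2 : β ^ 2 ≠ 0 := pow_ne_zero 2 hβ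
  have hβA : IsUnit (β ^ 2 • A).det := by
    rw [det_smul]; exact (hβ2.isUnit.pow _).mul hA
  have hswap : (u - hybridMean J K β v) ∘ Fin.castAdd K =
      -((v - hybridMean J K β u) ∘ Fin.castAdd K) := by
    funext i; simp
  rw [smul_hybridCov, inv_hybridCov (α := β ^ 2 • α) (fun i => mul_ne_zero hβ2 (hα i)) hβA,
    dotProduct_hybridCov_mulVec, dotProduct_hybridCov_mulVec, hswap, mulVec_neg, neg_dotProduct,
    dotProduct_neg, neg_neg, dotProduct_inv_diagonal_mulVec hα, dotProduct_inv_diagonal_mulVec hα]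
  simp only [Fin.sum_univ_add, Pi.inv_apply, Pi.smul_apply, smul_eq_mul, Pi.sub_apply,
    hybridMean_natAdd, Fin.val_castAdd, Fin.is_lt, if_true, Fin.val_natAdd, add_lt_iff_neg_left,
    not_lt_zero, if_false, Finset.sum_const_zero, add_zero]
  set s := Real.sqrt (1 - β ^ 2)
  have hs : s ^ 2 = 1 - β ^ 2 := Real.sq_sqrt (by linarith)
  have hJ : ∑ i : Fin J, (u (Fin.castAdd K i) ^ 2 - v (Fin.castAdd K i) ^ 2) / α (Fin.castAdd K i) =
      ∑ i : Fin J, (α (Fin.castAdd K i))⁻¹ * u (Fin.castAdd K i) ^ 2 -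
        ∑ i : Fin J, (α (Fin.castAdd K i))⁻¹ * v (Fin.castAdd K i) ^ 2 := by
    rw [← Finset.sum_sub_distrib]
    exact Finset.sum_congr rfl fun i _ => by ring
  have hK : ∑ k : Fin K, ((α (Fin.natAdd J k))⁻¹ * v (Fin.natAdd J k) ^ 2 +
      (β ^ 2 * α (Fin.natAdd J k))⁻¹ * (u (Fin.natAdd J k) - s * v (Fin.natAdd J k)) ^ 2) =
      ∑ k : Fin K, ((α (Fin.natAdd J k))⁻¹ * u (Fin.natAdd J k) ^ 2 +
      (β ^ 2 * α (Fin.natAdd J k))⁻¹ * (v (Fin.natAdd J k) - s * u (Fin.natAdd J k)) ^ 2) :=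
    Finset.sum_congr rfl fun k _ => by
      linear_combination (α (Fin.natAdd J k))⁻¹ *
        pCN_sq_balance hβ2 hs (u (Fin.natAdd J k)) (v (Fin.natAdd J k))
  simp only [Finset.sum_add_distrib] at hK
  linarith

lemma gaussianPDF_nonneg {d : ℕ} (m : Fin d → ℝ) {S : Matrix (Fin d) (Fin d) ℝ} (hS : 0 ≤ S.det)
    (x : Fin d → ℝ) : 0 ≤ gaussianPDF d m S x :=
  mul_nonneg (mul_nonneg (Real.rpow_nonneg (by positivity) _) (Real.rpow_nonneg hS _))
    (Real.exp_nonneg _)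

lemma continuous_gaussianPDF (d : ℕ) (S : Matrix (Fin d) (Fin d) ℝ) :
    Continuous fun p : (Fin d → ℝ) × (Fin d → ℝ) => gaussianPDF d p.1 S p.2 := by
  unfold _root_.gaussianPDF
  fun_prop

@[fun_prop]
lemma Measurable.gaussianPDF {E : Type*} [MeasurableSpace E] {d : ℕ}
    {S : Matrix (Fin d) (Fin d) ℝ} {m x : E → Fin d → ℝ} (hm : Measurable m) (hx : Measurable x) :
    Measurable fun e => _root_.gaussianPDF d (m e) S (x e) :=
  (continuous_gaussianPDF d S).measurable2 (c := fun m x => _root_.gaussianPDF d m S x) hm hx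

@[fun_prop]
lemma measurable_hybridMean (J K : ℕ) (β : ℝ) : Measurable (hybridMean J K β) :=
  measurable_pi_lambda _ fun i => by unfold hybridMean; split_ifs <;> fun_prop

lemma gaussianPDF_hybrid_balance {J K : ℕ} {α : Fin (J + K) → ℝ} (hα : ∀ i, α i ≠ 0) {β : ℝ}
    (hβ : β ≠ 0) (hβ1 : β ^ 2 ≤ 1) {A : Matrix (Fin J) (Fin J) ℝ} (hA : IsUnit A.det)
    (u v : Fin (J + K) → ℝ) :
    gaussianPDF (J + K) 0 (diagonal α) v *
        gaussianPDF (J + K) (hybridMean J K β v) (β ^ 2 • hybridCov J K α A) u =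
      Real.exp ((1 / 2) * ∑ i : Fin (J + K),
          if (i : ℕ) < J then (u i ^ 2 - v i ^ 2) / α i else 0) *
        (gaussianPDF (J + K) 0 (diagonal α) u *
          gaussianPDF (J + K) (hybridMean J K β u) (β ^ 2 • hybridCov J K α A) v) := by
  have hexp := hybrid_exponent_balance hα hβ hβ1 hA u v
  simp only [_root_.gaussianPDF, sub_zero]
  generalize v ⬝ᵥ ((diagonal α)⁻¹ *ᵥ v) = a at hexp ⊢
  generalize u ⬝ᵥ ((diagonal α)⁻¹ *ᵥ u) = a' at hexp ⊢
  generalize (u - hybridMean J K β v) ⬝ᵥ _ = b at hexp ⊢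
  generalize (v - hybridMean J K β u) ⬝ᵥ _ = b' at hexp ⊢
  generalize (∑ i : Fin (J + K), if (i : ℕ) < J then (u i ^ 2 - v i ^ 2) / α i else 0) = t
    at hexp ⊢
  have : Real.exp (-(1 / 2) * a) * Real.exp (-(1 / 2) * b) =
      Real.exp (1 / 2 * t) * (Real.exp (-(1 / 2) * a') * Real.exp (-(1 / 2) * b')) := by
    simp only [← Real.exp_add]
    congr 1
    linarith
  rw [mul_mul_mul_comm, this]
  ring

lemma hybrid_detailed_balance {J K : ℕ} {α : Fin (J + K) → ℝ} (hα : ∀ i, 0 < α i) {β : ℝ}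
    (hβ : β ∈ Set.Ioo (0 : ℝ) 1) {A : Matrix (Fin J) (Fin J) ℝ} (hA : A.PosDef)
    (Φ : (Fin (J + K) → ℝ) → ℝ) (Z : ℝ) (u v : Fin (J + K) → ℝ) :
    ENNReal.ofReal (gaussianPDF (J + K) 0 (diagonal α) v) * ENNReal.ofReal (Real.exp (-Φ v) / Z) *
        ENNReal.ofReal (gaussianPDF (J + K) (hybridMean J K β v) (β ^ 2 • hybridCov J K α A) u) =
      ENNReal.ofReal (Real.exp (Φ u - Φ v + (1 / 2) * ∑ i : Fin (J + K),
          if (i : ℕ) < J then (u i ^ 2 - v i ^ 2) / α i else 0)) *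
        (ENNReal.ofReal (gaussianPDF (J + K) 0 (diagonal α) u) *
          ENNReal.ofReal (Real.exp (-Φ u) / Z) *
          ENNReal.ofReal
            (gaussianPDF (J + K) (hybridMean J K β u) (β ^ 2 • hybridCov J K α A) v)) := by
  have hD : 0 ≤ (diagonal α).det := by
    rw [det_diagonal]; exact Finset.prod_nonneg fun i _ => (hα i).le
  have hC : 0 ≤ (β ^ 2 • hybridCov J K α A).det := by
    rw [det_smul, det_hybridCov]
    exact mul_nonneg (by positivity)
      (mul_nonneg hA.det_pos.le (Finset.prod_nonneg fun k _ => (hα _).le))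
  rw [← ENNReal.ofReal_mul (gaussianPDF_nonneg _ hD _),
    ← ENNReal.ofReal_mul' (gaussianPDF_nonneg _ hC _),
    ← ENNReal.ofReal_mul (gaussianPDF_nonneg _ hD _),
    ← ENNReal.ofReal_mul' (gaussianPDF_nonneg _ hC _),
    ← ENNReal.ofReal_mul (Real.exp_nonneg _)]
  congr 1
  have hgauss := gaussianPDF_hybrid_balance (fun i => (hα i).ne') hβ.1.ne'
    (by nlinarith [hβ.1, hβ.2]) hA.det_pos.ne'.isUnit u v
  have hΦ : Real.exp (Φ u - Φ v + (1 / 2) * ∑ i : Fin (J + K),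
        if (i : ℕ) < J then (u i ^ 2 - v i ^ 2) / α i else 0) * Real.exp (-Φ u) =
      Real.exp ((1 / 2) * ∑ i : Fin (J + K),
        if (i : ℕ) < J then (u i ^ 2 - v i ^ 2) / α i else 0) * Real.exp (-Φ v) := by
    rw [← Real.exp_add, ← Real.exp_add]; ring_nf
  linear_combination Real.exp (-Φ v) / Z * hgauss - gaussianPDF (J + K) 0 (diagonal α) u *
    gaussianPDF (J + K) (hybridMean J K β u) (β ^ 2 • hybridCov J K α A) v / Z * hΦ

section DetailedBalance

variable {X Y : Type*} [MeasurableSpace X] [MeasurableSpace Y]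

lemma map_swap_withDensity_prod (ν₁ : Measure X) (ν₂ : Measure Y) [SFinite ν₁] [SFinite ν₂]
    {f : X × Y → ℝ≥0∞} (hf : Measurable f) :
    ((ν₁.prod ν₂).withDensity f).map Prod.swap = (ν₂.prod ν₁).withDensity (f ∘ Prod.swap) := by
  refine Measure.ext_of_lintegral _ fun φ hφ => ?_
  rw [lintegral_map hφ measurable_swap]
  change ∫⁻ z, (φ ∘ Prod.swap) z ∂_ = _
  rw [lintegral_withDensity_eq_lintegral_mul _ hf (hφ.comp measurable_swap),
    lintegral_withDensity_eq_lintegral_mul _ (hf.comp measurable_swap) hφ,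
    ← lintegral_prod_swap]
  rfl

lemma withDensity_compProd_eq_withDensity_prod (ν : Measure X) (ν' : Measure Y)
    [SFinite ν] [SFinite ν'] {p : X → ℝ≥0∞} (hp : Measurable p) {k : X → Y → ℝ≥0∞}
    (hk : Measurable (Function.uncurry k)) (hk_top : ∀ u v, k u v ≠ ∞) {q : Kernel X Y}
    (hq : ∀ u, q u = ν'.withDensity (k u)) :
    ν.withDensity p ⊗ₘ q = (ν.prod ν').withDensity fun z => p z.1 * k z.1 z.2 := by
  have := Kernel.IsSFiniteKernel.withDensity (Kernel.const X ν') hk_top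
  have hq' : q = (Kernel.const X ν').withDensity k := by
    ext1 u; rw [hq, Kernel.withDensity_apply _ hk, Kernel.const_apply]
  rw [hq', Measure.compProd_withDensity hk, Measure.compProd_const, prod_withDensity_left hp]
  exact (withDensity_mul _ (hp.comp measurable_fst) hk).symm

variable (ν : Measure X) [SFinite ν] {p : X → ℝ≥0∞} {k : X → X → ℝ≥0∞} {q : Kernel X X}
  {r : X × X → ℝ≥0∞}

theorem map_swap_withDensity_compProd (hp : Measurable p) (hk : Measurable (Function.uncurry k))
    (hk_top : ∀ u v, k u v ≠ ∞)
    (hq : ∀ u, q u = ν.withDensity (k u)) (hr : Measurable r)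
    (hbalance : ∀ u v, p v * k v u = r (u, v) * (p u * k u v)) :
    (ν.withDensity p ⊗ₘ q).map Prod.swap = (ν.withDensity p ⊗ₘ q).withDensity r := by
  have hpk : Measurable fun z : X × X => p z.1 * k z.1 z.2 := (hp.comp measurable_fst).mul hk
  rw [withDensity_compProd_eq_withDensity_prod ν ν hp hk hk_top hq,
    map_swap_withDensity_prod ν ν hpk, ← withDensity_mul _ hpk hr]
  congr 1
  funext z
  show p z.2 * k z.2 z.1 = p z.1 * k z.1 z.2 * r z
  rw [hbalance, mul_comm]

theorem rnDeriv_map_swap_withDensity_compProd [SigmaFinite ν] (hp : Measurable p)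
    (hp_top : ∀ u, p u ≠ ∞) (hk : Measurable (Function.uncurry k)) (hk_top : ∀ u v, k u v ≠ ∞)
    (hq : ∀ u, q u = ν.withDensity (k u)) (hr : Measurable r)
    (hbalance : ∀ u v, p v * k v u = r (u, v) * (p u * k u v)) :
    (ν.withDensity p ⊗ₘ q).map Prod.swap ≪ ν.withDensity p ⊗ₘ q ∧
      ((ν.withDensity p ⊗ₘ q).map Prod.swap).rnDeriv (ν.withDensity p ⊗ₘ q)
        =ᵐ[ν.withDensity p ⊗ₘ q] r := by
  have : SigmaFinite (ν.withDensity p ⊗ₘ q) := by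
    rw [withDensity_compProd_eq_withDensity_prod ν ν hp hk hk_top hq]
    exact SigmaFinite.withDensity_of_ne_top
      (.of_forall fun z => ENNReal.mul_ne_top (hp_top _) (hk_top _ _))
  rw [map_swap_withDensity_compProd ν hp hk hk_top hq hr hbalance]
  exact ⟨withDensity_absolutelyContinuous _ _, Measure.rnDeriv_withDensity _ hr⟩

end DetailedBalance

theorem hybrid_acceptance_ratio_general
    (J K : ℕ)
    (α : Fin (J + K) → ℝ) (hα : ∀ i, 0 < α i)
    (β : ℝ) (hβ : β ∈ Set.Ioo (0 : ℝ) 1)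
    (Sm : Matrix (Fin J) (Fin J) ℝ) (hSm : Sm.PosDef)
    (μ₀ : Measure (Fin (J + K) → ℝ))
    (hμ₀ : μ₀ = gaussianMeasure (J + K) 0 (Matrix.diagonal α))
    (q : Kernel (Fin (J + K) → ℝ) (Fin (J + K) → ℝ))
    (hq : ∀ u, q u = gaussianMeasure (J + K) (hybridMean J K β u)
      ((β ^ 2) • hybridCov J K α Sm))
    (Φ : (Fin (J + K) → ℝ) → ℝ) (hΦ : Measurable Φ)
    (Z : ℝ)
    (μ : Measure (Fin (J + K) → ℝ))
    (hμ : μ = μ₀.withDensity fun u => ENNReal.ofReal (Real.exp (-Φ u) / Z)) :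
    Measure.map Prod.swap (μ ⊗ₘ q) ≪ (μ ⊗ₘ q) ∧
      (Measure.map Prod.swap (μ ⊗ₘ q)).rnDeriv (μ ⊗ₘ q) =ᵐ[μ ⊗ₘ q]
        fun p => ENNReal.ofReal (Real.exp (Φ p.1 - Φ p.2 +
          (1 / 2) * ∑ i : Fin (J + K),
            if (i : ℕ) < J then (p.1 i ^ 2 - p.2 i ^ 2) / α i else 0)) := by
  have hprior : Measurable fun u => ENNReal.ofReal (gaussianPDF (J + K) 0 (diagonal α) u) := by
    fun_prop
  have hlikelihood : Measurable fun u => ENNReal.ofReal (Real.exp (-Φ u) / Z) := by fun_prop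
  have hsum : Measurable fun z : (Fin (J + K) → ℝ) × (Fin (J + K) → ℝ) => ∑ i : Fin (J + K),
      if (i : ℕ) < J then (z.1 i ^ 2 - z.2 i ^ 2) / α i else 0 :=
    Finset.measurable_sum _ fun i _ => by split_ifs <;> fun_prop
  rw [hμ, hμ₀, gaussianMeasure, ← withDensity_mul _ hprior hlikelihood]
  exact rnDeriv_map_swap_withDensity_compProd volume (hprior.mul hlikelihood)
    (fun u => ENNReal.mul_ne_top ENNReal.ofReal_ne_top ENNReal.ofReal_ne_top)
    (k := fun u v => ENNReal.ofReal
      (gaussianPDF (J + K) (hybridMean J K β u) (β ^ 2 • hybridCov J K α Sm) v))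
    (by fun_prop) (fun u v => ENNReal.ofReal_ne_top) hq (by fun_prop)
    (hybrid_detailed_balance hα hβ hSm Φ Z)

/-- Proposition 2.1 of the paper, in the finite-dimensional setting: for the hybrid
proposal kernel (adaptive Metropolis with covariance `β²Σ` on the first `J` modes,
pCN on the remaining `K` modes), the swapped joint measure `η⊥` is absolutely
continuous with respect to `η = μ ⊗ₘ q`, with density
`exp(Φ(u) − Φ(v) + ½ ∑_{i≤J} (u_i² − v_i²)/α_i)`. -/
theorem hybrid_acceptance_ratio
    (J K : ℕ) (hJ : 0 < J) (hK : 0 < K)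
    (α : Fin (J + K) → ℝ) (hα : ∀ i, 0 < α i)
    (β : ℝ) (hβ : β ∈ Set.Ioo (0 : ℝ) 1)
    (Sm : Matrix (Fin J) (Fin J) ℝ) (hSm : Sm.PosDef)
    (μ₀ : Measure (Fin (J + K) → ℝ))
    (hμ₀ : μ₀ = gaussianMeasure (J + K) 0 (Matrix.diagonal α))
    (q : Kernel (Fin (J + K) → ℝ) (Fin (J + K) → ℝ)) [IsMarkovKernel q]
    (hq : ∀ u, q u = gaussianMeasure (J + K) (hybridMean J K β u)
      ((β ^ 2) • hybridCov J K α Sm))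
    (Φ : (Fin (J + K) → ℝ) → ℝ) (hΦ : Measurable Φ)
    (hint : Integrable (fun u => Real.exp (-Φ u)) μ₀)
    (Z : ℝ) (hZ : Z = ∫ u, Real.exp (-Φ u) ∂μ₀)
    (μ : Measure (Fin (J + K) → ℝ))
    (hμ : μ = μ₀.withDensity fun u => ENNReal.ofReal (Real.exp (-Φ u) / Z)) :
    Measure.map Prod.swap (μ ⊗ₘ q) ≪ (μ ⊗ₘ q) ∧
      (Measure.map Prod.swap (μ ⊗ₘ q)).rnDeriv (μ ⊗ₘ q) =ᵐ[μ ⊗ₘ q]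
        fun p => ENNReal.ofReal (Real.exp (Φ p.1 - Φ p.2 +
          (1 / 2) * ∑ i : Fin (J + K),
            if (i : ℕ) < J then (p.1 i ^ 2 - p.2 i ^ 2) / α i else 0)) :=
  hybrid_acceptance_ratio_general J K α hα β hβ Sm hSm μ₀ hμ₀ q hq Φ hΦ Z μ hμ
end

section
/- Let D and S be symmetric positive definite J × J real matrices, let μ₀ = N(0, D) be the centered Gaussian measure on ℝ^J with covariance D, and let q be the random-walk kernel q(u, ·) = N(u, S). Set η₀ = μ₀ ⊗ₖ q and let η₀⊥ be the pushforward of η₀ under the swap map (u, v) ↦ (v, u). Then η₀⊥ is absolutely continuous with respect to η₀ and, for η₀-almost every (u, v), (dη₀⊥/dη₀)(u, v) = exp( (1/2)(uᵀ D⁻¹ u − vᵀ D⁻¹ v) ). In particular, if D = diag(α₁, …, α_J), the density equals exp( (1/2) ∑_{i=1}^{J} (u_i² − v_i²)/α_i ). -/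
open MeasureTheory ProbabilityTheory Matrix
open ENNReal

lemma aux_measurable_gaussianPDF (d : ℕ) (S : Matrix (Fin d) (Fin d) ℝ) :
    Measurable (fun p : (Fin d → ℝ) × (Fin d → ℝ) => _root_.gaussianPDF d p.1 S p.2) := by
  unfold _root_.gaussianPDF
  simp only [dotProduct, Matrix.mulVec, Pi.sub_apply]
  fun_prop

lemma aux_gaussianPDF_pos (d : ℕ) (m : Fin d → ℝ) (S : Matrix (Fin d) (Fin d) ℝ)
    (hS : S.PosDef) (x : Fin d → ℝ) : 0 < _root_.gaussianPDF d m S x := by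
  have h := hS.det_pos
  unfold _root_.gaussianPDF
  positivity

lemma aux_gaussianPDF_symm (d : ℕ) (S : Matrix (Fin d) (Fin d) ℝ) (u v : Fin d → ℝ) :
    _root_.gaussianPDF d v S u = _root_.gaussianPDF d u S v := by
  unfold _root_.gaussianPDF
  rw [show u - v = -(v - u) from (neg_sub v u).symm, Matrix.mulVec_neg, dotProduct_neg,
    neg_dotProduct, neg_neg]

lemma aux_measurable_gaussianPDF1 (d : ℕ) (m : Fin d → ℝ) (S : Matrix (Fin d) (Fin d) ℝ) :
    Measurable (_root_.gaussianPDF d m S) := by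
  unfold _root_.gaussianPDF
  simp only [dotProduct, Matrix.mulVec, Pi.sub_apply]
  fun_prop

lemma aux_measurable_quadForm (d : ℕ) (M : Matrix (Fin d) (Fin d) ℝ) :
    Measurable (fun u : Fin d → ℝ => u ⬝ᵥ M *ᵥ u) := by
  simp only [dotProduct, Matrix.mulVec]
  fun_prop

lemma aux_compProd_withDensity_eq {α β : Type*} [MeasurableSpace α] [MeasurableSpace β]
    (μ : Measure α) (ν : Measure β) [SigmaFinite μ] [SigmaFinite ν]
    {f : α → ℝ≥0∞} {g : α × β → ℝ≥0∞} (hf : Measurable f) (hg : Measurable g)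
    (q : Kernel α β) [IsSFiniteKernel q]
    (hq : ∀ u, q u = ν.withDensity (fun v => g (u, v))) :
    (μ.withDensity f) ⊗ₘ q = (μ.prod ν).withDensity (fun p => f p.1 * g p) := by
  have hfg : Measurable (fun p : α × β => f p.1 * g p) := (hf.comp measurable_fst).mul hg
  ext s hs
  rw [Measure.compProd_apply hs, withDensity_apply _ hs,
    lintegral_withDensity_eq_lintegral_mul _ hf (Kernel.measurable_kernel_prodMk_left hs),
    ← lintegral_indicator hs _, lintegral_prod _ ((hfg.indicator hs).aemeasurable)]
  refine lintegral_congr fun u => ?_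
  simp only [Pi.mul_apply]
  have hind : Measurable fun v : β => (Prod.mk u ⁻¹' s).indicator (fun v => g (u, v)) v :=
    (hg.comp measurable_prodMk_left).indicator (measurable_prodMk_left hs)
  rw [hq u, withDensity_apply _ (measurable_prodMk_left hs),
    ← lintegral_indicator (measurable_prodMk_left hs) _,
    ← lintegral_const_mul _ hind]
  refine lintegral_congr fun v => ?_
  by_cases h : (u, v) ∈ s <;> simp [h]

lemma aux_map_swap_withDensity {α β : Type*} [MeasurableSpace α] [MeasurableSpace β]
    (μ : Measure α) (ν : Measure β) [SFinite μ] [SFinite ν]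
    {f : α × β → ℝ≥0∞} (hf : Measurable f) :
    Measure.map Prod.swap ((μ.prod ν).withDensity f)
      = (ν.prod μ).withDensity (fun p => f p.swap) := by
  ext s hs
  have hG : Measurable fun p : β × α => s.indicator (fun a : β × α => f a.swap) p :=
    (hf.comp measurable_swap).indicator hs
  rw [Measure.map_apply measurable_swap hs, withDensity_apply _ (measurable_swap hs),
    withDensity_apply _ hs, ← lintegral_indicator (measurable_swap hs) _,
    ← lintegral_indicator hs _,
    ← (Measure.measurePreserving_swap (μ := μ) (ν := ν)).lintegral_comp hG]
  refine lintegral_congr fun p => ?_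
  by_cases h : p.swap ∈ s <;> simp [h, Set.indicator]

/-- For the random-walk proposal `q(u, ·) = N(u, S)` and the Gaussian prior
`μ₀ = N(0, D)`, the swap of `η₀ = μ₀ ⊗ₘ q` is absolutely continuous with respect to
`η₀`, with density `exp(½(uᵀD⁻¹u − vᵀD⁻¹v))`; in the diagonal case
`D = diag(α₁, …, α_J)` the density is `exp(½ ∑ᵢ (uᵢ² − vᵢ²)/αᵢ)`. -/
theorem randomWalk_swap_rnDeriv
    (J : ℕ) (hJ : 0 < J)
    (D S : Matrix (Fin J) (Fin J) ℝ) (hD : D.PosDef) (hS : S.PosDef)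
    (μ₀ : Measure (Fin J → ℝ)) (hμ₀ : μ₀ = gaussianMeasure J 0 D)
    (q : Kernel (Fin J → ℝ) (Fin J → ℝ)) [IsMarkovKernel q]
    (hq : ∀ u, q u = gaussianMeasure J u S) :
    Measure.map Prod.swap (μ₀ ⊗ₘ q) ≪ (μ₀ ⊗ₘ q) ∧
      (Measure.map Prod.swap (μ₀ ⊗ₘ q)).rnDeriv (μ₀ ⊗ₘ q) =ᵐ[μ₀ ⊗ₘ q]
        (fun p => ENNReal.ofReal
          (Real.exp ((1 / 2) * (p.1 ⬝ᵥ (D⁻¹ *ᵥ p.1) - p.2 ⬝ᵥ (D⁻¹ *ᵥ p.2))))) ∧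
      ∀ α : Fin J → ℝ, D = Matrix.diagonal α →
        (Measure.map Prod.swap (μ₀ ⊗ₘ q)).rnDeriv (μ₀ ⊗ₘ q) =ᵐ[μ₀ ⊗ₘ q]
          fun p => ENNReal.ofReal
            (Real.exp ((1 / 2) * ∑ i, (p.1 i ^ 2 - p.2 i ^ 2) / α i)) := by
  classical
  set f₀ : (Fin J → ℝ) → ℝ := fun u => _root_.gaussianPDF J 0 D u with hf₀def
  set g : (Fin J → ℝ) × (Fin J → ℝ) → ℝ := fun p => _root_.gaussianPDF J p.1 S p.2 with hgdef
  have hmf₀ : Measurable f₀ :=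
    aux_measurable_gaussianPDF1 J 0 D
  have hmg : Measurable g := aux_measurable_gaussianPDF J S
  have hf₀pos : ∀ u, 0 < f₀ u := fun u => aux_gaussianPDF_pos J 0 D hD u
  have hgpos : ∀ p, 0 < g p := fun p => aux_gaussianPDF_pos J p.1 S hS p.2
  -- the density of η₀
  set H : (Fin J → ℝ) × (Fin J → ℝ) → ℝ≥0∞ :=
    fun p => ENNReal.ofReal (f₀ p.1 * g p) with hHdef
  have hmH : Measurable H := ((hmf₀.comp measurable_fst).mul hmg).ennreal_ofReal
  -- the candidate Radon–Nikodym density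
  set R : (Fin J → ℝ) × (Fin J → ℝ) → ℝ≥0∞ := fun p => ENNReal.ofReal
    (Real.exp ((1 / 2) * (p.1 ⬝ᵥ (D⁻¹ *ᵥ p.1) - p.2 ⬝ᵥ (D⁻¹ *ᵥ p.2)))) with hRdef
  have hmR : Measurable R := by
    refine Measurable.ennreal_ofReal (Real.measurable_exp.comp (Measurable.const_mul ?_ _))
    exact ((aux_measurable_quadForm J D⁻¹).comp measurable_fst).sub
      ((aux_measurable_quadForm J D⁻¹).comp measurable_snd)
  -- η₀ as a density w.r.t. the product Lebesgue measure
  have hη : μ₀ ⊗ₘ q = (volume.prod volume).withDensity H := by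
    rw [hμ₀]
    unfold gaussianMeasure
    rw [aux_compProd_withDensity_eq volume volume hmf₀.ennreal_ofReal hmg.ennreal_ofReal q
      (fun u => by rw [hq u]; rfl)]
    congr 1
    funext p
    exact (ENNReal.ofReal_mul (hf₀pos p.1).le).symm
  -- the key pointwise identity
  have hkey : (fun p : (Fin J → ℝ) × (Fin J → ℝ) => H p.swap) = H * R := by
    funext p
    simp only [Pi.mul_apply]
    have hsymm : g p.swap = g p := aux_gaussianPDF_symm J S p.1 p.2
    have hf : f₀ p.2 = f₀ p.1 *
        Real.exp ((1 / 2) * (p.1 ⬝ᵥ (D⁻¹ *ᵥ p.1) - p.2 ⬝ᵥ (D⁻¹ *ᵥ p.2))) := by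
      have e : Real.exp (-(1 / 2) * (p.2 ⬝ᵥ D⁻¹ *ᵥ p.2))
          = Real.exp (-(1 / 2) * (p.1 ⬝ᵥ D⁻¹ *ᵥ p.1)) *
            Real.exp ((1 / 2) * (p.1 ⬝ᵥ D⁻¹ *ᵥ p.1 - p.2 ⬝ᵥ D⁻¹ *ᵥ p.2)) := by
        rw [← Real.exp_add]; congr 1; ring
      simp only [hf₀def]
      unfold _root_.gaussianPDF
      simp only [sub_zero]
      rw [e]; ring
    show ENNReal.ofReal (f₀ p.2 * g p.swap) = _
    rw [hsymm, hf, hRdef, hHdef, ← ENNReal.ofReal_mul (mul_pos (hf₀pos p.1) (hgpos p)).le]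
    congr 1
    ring
  -- the swapped measure
  have hswap : Measure.map Prod.swap (μ₀ ⊗ₘ q) = (μ₀ ⊗ₘ q).withDensity R := by
    rw [hη, aux_map_swap_withDensity volume volume hmH, hkey,
      withDensity_mul (volume.prod volume) hmH hmR]
  haveI : SigmaFinite (μ₀ ⊗ₘ q) := by
    rw [hη, hHdef]
    exact SigmaFinite.withDensity_ofReal _
  have hac : Measure.map Prod.swap (μ₀ ⊗ₘ q) ≪ (μ₀ ⊗ₘ q) := by
    rw [hswap]; exact withDensity_absolutelyContinuous _ _
  have hrn : (Measure.map Prod.swap (μ₀ ⊗ₘ q)).rnDeriv (μ₀ ⊗ₘ q) =ᵐ[μ₀ ⊗ₘ q] R := by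
    rw [hswap]
    exact Measure.rnDeriv_withDensity _ hmR
  refine ⟨hac, hrn, fun α hα => ?_⟩
  -- diagonal case
  have hαpos : ∀ i, 0 < α i := by
    rw [hα] at hD
    exact Matrix.posDef_diagonal_iff.mp hD
  have hinv : D⁻¹ = Matrix.diagonal (fun i => (α i)⁻¹) := by
    rw [hα]
    apply Matrix.inv_eq_right_inv
    rw [Matrix.diagonal_mul_diagonal]
    have : (fun i => α i * (α i)⁻¹) = fun _ => (1 : ℝ) :=
      funext fun i => mul_inv_cancel₀ (hαpos i).ne'
    rw [this]
    exact Matrix.diagonal_one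
  have hquad : ∀ u : Fin J → ℝ, u ⬝ᵥ (D⁻¹ *ᵥ u) = ∑ i, u i ^ 2 / α i := by
    intro u
    rw [hinv]
    simp only [dotProduct, Matrix.mulVec_diagonal]
    exact Finset.sum_congr rfl fun i _ => by ring
  have hfun : (fun p : (Fin J → ℝ) × (Fin J → ℝ) => ENNReal.ofReal
      (Real.exp ((1 / 2) * (p.1 ⬝ᵥ (D⁻¹ *ᵥ p.1) - p.2 ⬝ᵥ (D⁻¹ *ᵥ p.2)))))
      = fun p => ENNReal.ofReal
        (Real.exp ((1 / 2) * ∑ i, (p.1 i ^ 2 - p.2 i ^ 2) / α i)) := by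
    funext p
    rw [hquad p.1, hquad p.2, ← Finset.sum_sub_distrib]
    congr 2
    exact congrArg _ (Finset.sum_congr rfl fun i _ => (sub_div _ _ _).symm)
  rw [← hfun]
  exact hrn
end

section
/- Let D be a symmetric positive definite K × K real matrix, let β ∈ (0, 1), and define g : ℝ^K × ℝ^K → ℝ by g(u, v) = φ_D(u) · φ_{β²D}(v − √(1 − β²) u), where φ_S denotes the density of the centered Gaussian N(0, S) on ℝ^K. Then g is symmetric: g(u, v) = g(v, u) for all u, v ∈ ℝ^K. Equivalently, if μ₀ = N(0, D) and q is the preconditioned Crank–Nicolson kernel q(u, ·) = N(√(1 − β²) u, β² D), then the joint measure μ₀ ⊗ₖ q on ℝ^K × ℝ^K is invariant under the swap map (u, v) ↦ (v, u). -/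
open MeasureTheory ProbabilityTheory Matrix

/-- The pCN joint density `g(u, v) = φ_D(u) φ_{β²D}(v − √(1−β²) u)` is symmetric in
`(u, v)`; equivalently, the joint measure `μ₀ ⊗ₘ q` of the prior `N(0, D)` and the
pCN kernel `q(u, ·) = N(√(1−β²) u, β²D)` is invariant under the swap map. -/
theorem pCN_joint_symmetric
    (K : ℕ) (hK : 0 < K)
    (D : Matrix (Fin K) (Fin K) ℝ) (hD : D.PosDef)
    (β : ℝ) (hβ : β ∈ Set.Ioo (0 : ℝ) 1)
    (g : (Fin K → ℝ) → (Fin K → ℝ) → ℝ)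
    (hg : ∀ u v, g u v =
      gaussianPDF K 0 D u *
        gaussianPDF K 0 ((β ^ 2) • D) (v - Real.sqrt (1 - β ^ 2) • u))
    (μ₀ : Measure (Fin K → ℝ)) (hμ₀ : μ₀ = gaussianMeasure K 0 D)
    (q : Kernel (Fin K → ℝ) (Fin K → ℝ)) [IsMarkovKernel q]
    (hq : ∀ u, q u = gaussianMeasure K (Real.sqrt (1 - β ^ 2) • u) ((β ^ 2) • D)) :
    (∀ u v, g u v = g v u) ∧
      Measure.map Prod.swap (μ₀ ⊗ₘ q) = (μ₀ ⊗ₘ q) := by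
  obtain ⟨hβ0, hβ1⟩ := hβ
  have hb2 : (0:ℝ) < β ^ 2 := by positivity
  have h1b : (0:ℝ) ≤ 1 - β ^ 2 := by nlinarith
  set σ : ℝ := Real.sqrt (1 - β ^ 2) with hσdef
  have hσ2 : σ ^ 2 = 1 - β ^ 2 := Real.sq_sqrt h1b
  have hDT : Dᵀ = D := by
    have := hD.1
    rwa [Matrix.IsHermitian, conjTranspose_eq_transpose_of_trivial] at this
  have hAsymm : D⁻¹ᵀ = D⁻¹ := by rw [Matrix.transpose_nonsing_inv, hDT]
  have hinv : ((β ^ 2) • D)⁻¹ = (β ^ 2)⁻¹ • D⁻¹ := by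
    have : Invertible (β ^ 2) := invertibleOfNonzero hb2.ne'
    rw [show ((β ^ 2)⁻¹ • D⁻¹ : Matrix (Fin K) (Fin K) ℝ) = ⅟(β ^ 2) • D⁻¹ by
      rw [invOf_eq_inv]]
    exact D.inv_smul (β ^ 2) (isUnit_iff_ne_zero.mpr hD.det_pos.ne')
  have cross : ∀ x y : Fin K → ℝ, x ⬝ᵥ D⁻¹ *ᵥ y = y ⬝ᵥ D⁻¹ *ᵥ x := by
    intro x y
    rw [Matrix.dotProduct_mulVec, ← Matrix.mulVec_transpose, hAsymm, dotProduct_comm]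
  have quad : ∀ u v : Fin K → ℝ, (v - σ • u) ⬝ᵥ D⁻¹ *ᵥ (v - σ • u) =
      v ⬝ᵥ D⁻¹ *ᵥ v - 2 * σ * (u ⬝ᵥ D⁻¹ *ᵥ v) + σ ^ 2 * (u ⬝ᵥ D⁻¹ *ᵥ u) := by
    intro u v
    simp only [Matrix.mulVec_sub, Matrix.mulVec_smul, sub_dotProduct, dotProduct_sub,
      smul_dotProduct, dotProduct_smul, smul_eq_mul]
    rw [cross v u]
    ring
  have scal : ∀ p r t : ℝ,
      -(1/2) * p + -(1/2) * ((β ^ 2)⁻¹ * (r - 2 * σ * t + σ ^ 2 * p)) =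
      -(1/2) * r + -(1/2) * ((β ^ 2)⁻¹ * (p - 2 * σ * t + σ ^ 2 * r)) := by
    intro p r t
    rw [hσ2]
    field_simp
    ring
  have form : ∀ u v : Fin K → ℝ, g u v =
      ((2 * Real.pi) ^ (-(K : ℝ) / 2) * D.det ^ (-(1:ℝ) / 2) *
        ((2 * Real.pi) ^ (-(K : ℝ) / 2) * ((β ^ 2) • D).det ^ (-(1:ℝ) / 2))) *
      Real.exp (-(1/2) * (u ⬝ᵥ D⁻¹ *ᵥ u) +
        -(1/2) * ((v - σ • u) ⬝ᵥ ((β ^ 2) • D)⁻¹ *ᵥ (v - σ • u))) := by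
    intro u v
    rw [hg]
    unfold _root_.gaussianPDF
    rw [sub_zero, sub_zero, Real.exp_add]
    ring
  have hsym : ∀ u v, g u v = g v u := by
    intro u v
    rw [form u v, form v u]
    congr 2
    rw [hinv]
    simp only [Matrix.smul_mulVec, dotProduct_smul, smul_eq_mul]
    rw [quad u v, quad v u, cross v u]
    exact scal _ _ _
  refine ⟨hsym, ?_⟩
  have hdetD : (0:ℝ) < D.det := hD.det_pos
  have nonnegD : ∀ u, 0 ≤ gaussianPDF K 0 D u := by
    intro u
    unfold _root_.gaussianPDF
    exact mul_nonneg (mul_nonneg (Real.rpow_nonneg (by positivity) _)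
      (Real.rpow_nonneg hdetD.le _)) (Real.exp_nonneg _)
  have hGm : Measurable fun p : (Fin K → ℝ) × (Fin K → ℝ) => ENNReal.ofReal (g p.1 p.2) := by
    have hcont : Continuous fun p : (Fin K → ℝ) × (Fin K → ℝ) => g p.1 p.2 := by
      have he : (fun p : (Fin K → ℝ) × (Fin K → ℝ) => g p.1 p.2) =
          fun p => gaussianPDF K 0 D p.1 *
            gaussianPDF K 0 ((β ^ 2) • D) (p.2 - σ • p.1) := funext fun p => hg p.1 p.2
      rw [he]
      unfold _root_.gaussianPDF
      simp only [sub_zero, dotProduct, Matrix.mulVec, dotProduct]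
      fun_prop
    exact hcont.measurable.ennreal_ofReal
  have hfm : Measurable fun u : Fin K → ℝ => ENNReal.ofReal (gaussianPDF K 0 D u) := by
    have hcont : Continuous fun u : Fin K → ℝ => gaussianPDF K 0 D u := by
      unfold _root_.gaussianPDF
      simp only [sub_zero, dotProduct, Matrix.mulVec, dotProduct]
      fun_prop
    exact hcont.measurable.ennreal_ofReal
  haveI : SFinite μ₀ := by rw [hμ₀]; unfold gaussianMeasure; infer_instance
  have hprod : μ₀ ⊗ₘ q = ((volume : Measure (Fin K → ℝ)).prod volume).withDensity
      (fun p => ENNReal.ofReal (g p.1 p.2)) := by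
    ext s hs
    rw [Measure.compProd_apply hs]
    have hint : Measurable fun u => q u (Prod.mk u ⁻¹' s) :=
      Kernel.measurable_kernel_prodMk_left hs
    rw [hμ₀]
    unfold gaussianMeasure
    rw [lintegral_withDensity_eq_lintegral_mul volume hfm hint]
    have hpt : ∀ u, ((fun u => ENNReal.ofReal (gaussianPDF K 0 D u)) *
        fun u => q u (Prod.mk u ⁻¹' s)) u =
        ∫⁻ v, Set.indicator s (fun p => ENNReal.ofReal (g p.1 p.2)) (u, v) := by
      intro u
      simp only [Pi.mul_apply]
      rw [hq u]
      unfold gaussianMeasure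
      rw [withDensity_apply _ (measurable_prodMk_left hs),
        ← lintegral_const_mul' _ _ ENNReal.ofReal_ne_top,
        ← lintegral_indicator (measurable_prodMk_left hs)]
      refine lintegral_congr fun v => ?_
      by_cases hv : (u, v) ∈ s
      · rw [Set.indicator_of_mem (Set.mem_preimage.mpr hv) _, Set.indicator_of_mem hv _,
          ← ENNReal.ofReal_mul (nonnegD u), hg]
        congr 2
        unfold _root_.gaussianPDF
        rw [sub_zero]
      · rw [Set.indicator_of_notMem (fun h => hv (Set.mem_preimage.mp h)) _,
          Set.indicator_of_notMem hv _]
    rw [lintegral_congr hpt, withDensity_apply _ hs, ← lintegral_indicator hs,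
      lintegral_prod _ (hGm.indicator hs).aemeasurable]
  rw [hprod]
  ext s hs
  rw [Measure.map_apply measurable_swap hs, withDensity_apply _ (measurable_swap hs),
    withDensity_apply _ hs, ← lintegral_indicator (measurable_swap hs),
    ← lintegral_indicator hs,
    ← (Measure.measurePreserving_swap).lintegral_comp (hGm.indicator hs)]
  congr 1
  funext p
  by_cases hp : Prod.swap p ∈ s
  · rw [Set.indicator_of_mem (Set.mem_preimage.mpr hp) _, Set.indicator_of_mem hp _]
    exact congrArg ENNReal.ofReal (hsym p.1 p.2)
  · rw [Set.indicator_of_notMem (fun h => hp (Set.mem_preimage.mp h)) _,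
      Set.indicator_of_notMem hp _]
end

section
/- Let (X, 𝒜) be a measurable space, μ a probability measure on X, and q a Markov kernel from X to X. Set η = μ ⊗ₖ q and let η⊥ be the pushforward of η under the swap map (u, v) ↦ (v, u). Assume η⊥ is absolutely continuous with respect to η with density r, and define the acceptance probability a(u, v) = min{1, r(u, v)}. Then the accepted-move flux is symmetric: for all measurable sets A, B ⊆ X, ∫_A ( ∫_B a(u, v) q(u, dv) ) μ(du) = ∫_B ( ∫_A a(u, v) q(u, dv) ) μ(du). Consequently, the Metropolis–Hastings kernel Q(u, A) = ∫_A a(u, v) q(u, dv) + 1_A(u)(1 − ∫_X a(u, v) q(u, dv)) satisfies detailed balance with respect to μ: ∫_A Q(u, B) μ(du) = ∫_B Q(u, A) μ(du) for all measurable A, B. -/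
open MeasureTheory ProbabilityTheory

lemma map_swap_withDensity_s7 {X : Type*} [MeasurableSpace X] (η : Measure (X × X))
    (f : X × X → ENNReal) (hf : Measurable f) :
    Measure.map Prod.swap (η.withDensity f) =
      (Measure.map Prod.swap η).withDensity (f ∘ Prod.swap) := by
  ext s hs
  rw [Measure.map_apply measurable_swap hs, withDensity_apply _ hs,
    withDensity_apply _ (measurable_swap hs),
    setLIntegral_map hs (hf.comp measurable_swap) measurable_swap]
  rfl

/-- Metropolis–Hastings detailed balance: if the swap of `η = μ ⊗ₘ q` has density `r`
with respect to `η`, and `a(u,v) = min {1, r(u,v)}`, then the accepted-move flux is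
symmetric, and the Metropolis–Hastings kernel
`Q(u, A) = ∫_A a(u,v) q(u,dv) + 1_A(u) (1 − ∫ a(u,v) q(u,dv))`
satisfies detailed balance with respect to `μ`. -/
theorem metropolis_hastings_detailed_balance
    {X : Type*} [MeasurableSpace X]
    (μ : Measure X) [IsProbabilityMeasure μ]
    (q : Kernel X X) [IsMarkovKernel q]
    (r : X × X → ENNReal) (hr : Measurable r)
    (hswap : Measure.map Prod.swap (μ ⊗ₘ q) = (μ ⊗ₘ q).withDensity r)
    (Q : X → Set X → ENNReal)
    (hQ : ∀ u A, Q u A = (∫⁻ v in A, min 1 (r (u, v)) ∂(q u)) +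
      Set.indicator A (fun _ => 1 - ∫⁻ v, min 1 (r (u, v)) ∂(q u)) u) :
    (∀ A B : Set X, MeasurableSet A → MeasurableSet B →
      ∫⁻ u in A, (∫⁻ v in B, min 1 (r (u, v)) ∂(q u)) ∂μ =
        ∫⁻ u in B, (∫⁻ v in A, min 1 (r (u, v)) ∂(q u)) ∂μ) ∧
    (∀ A B : Set X, MeasurableSet A → MeasurableSet B →
      ∫⁻ u in A, Q u B ∂μ = ∫⁻ u in B, Q u A ∂μ) := by
  set η := μ ⊗ₘ q with hη
  set a : X × X → ENNReal := fun x => min 1 (r x) with ha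
  have ha_meas : Measurable a := measurable_const.min hr
  have hrs : Measurable (r ∘ Prod.swap) := hr.comp measurable_swap
  -- swap is an involution
  have hswap2 : Measure.map Prod.swap (η.withDensity r) = η := by
    rw [← hswap, Measure.map_map measurable_swap measurable_swap]
    simp [Prod.swap_swap_eq]
  -- r * r∘swap = 1 a.e.
  have hmul : η.withDensity (r * (r ∘ Prod.swap)) = η.withDensity 1 := by
    rw [withDensity_one, withDensity_mul _ hr hrs]
    conv_rhs => rw [← hswap2, map_swap_withDensity_s7 _ _ hr, hswap]
  have hr1 : (r * (r ∘ Prod.swap)) =ᵐ[η] 1 :=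
    (withDensity_eq_iff_of_sigmaFinite (hr.mul hrs).aemeasurable
      aemeasurable_const).mp hmul
  -- key a.e. identity: r x * a(swap x) = a x
  have hkey : (fun x => r x * a x.swap) =ᵐ[η] a := by
    filter_upwards [hr1] with x hx
    simp only [Pi.one_apply, Pi.mul_apply, Function.comp_apply] at hx
    simp only [ha]
    rcases le_total 1 (r x.swap) with h | h
    · have hle : r x ≤ 1 := by
        calc r x = r x * 1 := (mul_one _).symm
        _ ≤ r x * r x.swap := mul_le_mul_right h _
        _ = 1 := hx
      rw [min_eq_left h, mul_one, min_eq_right hle]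
    · have hge : 1 ≤ r x := by
        calc 1 = r x * r x.swap := hx.symm
        _ ≤ r x * 1 := mul_le_mul_right h _
        _ = r x := mul_one _
      rw [min_eq_right h, hx, min_eq_left hge]
  -- π = η.withDensity a is swap-invariant
  have hπ : Measure.map Prod.swap (η.withDensity a) = η.withDensity a := by
    rw [map_swap_withDensity_s7 _ _ ha_meas, hswap, ← withDensity_mul _ hr
      (ha_meas.comp measurable_swap)]
    exact withDensity_congr_ae hkey
  -- flux as a measure of a product set
  have hflux : ∀ A B : Set X, MeasurableSet A → MeasurableSet B →
      ∫⁻ u in A, (∫⁻ v in B, min 1 (r (u, v)) ∂(q u)) ∂μ =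
        (η.withDensity a) (A ×ˢ B) := by
    intro A B hA hB
    rw [withDensity_apply _ (hA.prod hB), ← Measure.setLIntegral_compProd ha_meas hA hB]
  have part1 : ∀ A B : Set X, MeasurableSet A → MeasurableSet B →
      ∫⁻ u in A, (∫⁻ v in B, min 1 (r (u, v)) ∂(q u)) ∂μ =
        ∫⁻ u in B, (∫⁻ v in A, min 1 (r (u, v)) ∂(q u)) ∂μ := by
    intro A B hA hB
    rw [hflux A B hA hB, hflux B A hB hA]
    conv_rhs => rw [← hπ]
    rw [Measure.map_apply measurable_swap (hB.prod hA), Set.preimage_swap_prod]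
  refine ⟨part1, fun A B hA hB => ?_⟩
  -- measurability of the flux integrand
  have hm : ∀ B : Set X, MeasurableSet B →
      Measurable (fun u => ∫⁻ v in B, min 1 (r (u, v)) ∂(q u)) := by
    intro B hB
    have h2 : ∀ u, ∫⁻ v in B, min 1 (r (u, v)) ∂(q u) =
        ∫⁻ v, Set.indicator (Prod.snd ⁻¹' B) (fun p => min 1 (r p)) (u, v) ∂(q u) := by
      intro u
      rw [← lintegral_indicator hB]
      exact lintegral_congr fun v => rfl
    simp_rw [h2]
    exact Measurable.lintegral_kernel_prod_right
      ((measurable_const.min hr).indicator (measurable_snd hB))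
  simp only [hQ]
  rw [lintegral_add_left (hm B hB), lintegral_add_left (hm A hA),
    part1 A B hA hB]
  have hind : ∀ (C D : Set X), MeasurableSet D →
      ∫⁻ u in C, Set.indicator D (fun _ => 1 - ∫⁻ v, min 1 (r (u, v)) ∂(q u)) u ∂μ
        = ∫⁻ u in D ∩ C, (1 - ∫⁻ v, min 1 (r (u, v)) ∂(q u)) ∂μ := by
    intro C D hD
    have h3 : ∀ u : X, Set.indicator D (fun _ => 1 - ∫⁻ v, min 1 (r (u, v)) ∂(q u)) u
        = Set.indicator D (fun u => 1 - ∫⁻ v, min 1 (r (u, v)) ∂(q u)) u := by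
      intro u; rfl
    simp_rw [h3]
    rw [lintegral_indicator hD, Measure.restrict_restrict hD]
  congr 1
  rw [hind A B hB, hind B A hA, Set.inter_comm]
end

section
/- Let (X, 𝒜) be a measurable space, let u ∈ X, let a : X → [0, 1] be measurable, and let q₁, q₂ be probability measures on X with q₁ absolutely continuous with respect to q₂. Define, for i = 1, 2, Q_i(A) = ∫_A a(v) q_i(dv) + 1_A(u)(1 − ∫_X a(v) q_i(dv)). Then for every measurable set A ⊆ X, |Q₁(A) − Q₂(A)| ≤ 2 ∫_X | (dq₁/dq₂)(v) − 1 | q₂(dv). -/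
/-!
Writing `f = dq₁/dq₂`, for every measurable `g` with `|g| ≤ 1` one has
`∫ g dq₁ - ∫ g dq₂ = ∫ g (f - 1) dq₂`, so this difference is at most `∫ |f - 1| dq₂`.
Applied to `g = 1_A a` it bounds the difference of the first terms of `Q₁(A)` and `Q₂(A)`,
and applied to `g = a` it bounds the difference of the rejection terms; hence the factor `2`.
-/

open MeasureTheory

section

variable {X : Type*} [MeasurableSpace X] {μ ν : Measure X}

theorem abs_integral_sub_integral_le_integral_abs_rnDeriv_sub_one
    [IsFiniteMeasure μ] [IsFiniteMeasure ν] (hμν : μ ≪ ν) {g : X → ℝ}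
    (hgm : AEStronglyMeasurable g ν) (hg : ∀ᵐ x ∂ν, ‖g x‖ ≤ 1) :
    |∫ x, g x ∂μ - ∫ x, g x ∂ν| ≤ ∫ x, |(μ.rnDeriv ν x).toReal - 1| ∂ν := by
  set f : X → ℝ := fun x => (μ.rnDeriv ν x).toReal
  have hf : Integrable f ν := Measure.integrable_toReal_rnDeriv
  have hf1 : Integrable (fun x => f x - 1) ν := hf.sub (integrable_const 1)
  have hdiff : ∫ x, g x ∂μ - ∫ x, g x ∂ν = ∫ x, (f x - 1) * g x ∂ν := by
    rw [← integral_rnDeriv_smul hμν]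
    simp only [smul_eq_mul, sub_mul, one_mul]
    exact (integral_sub (hf.mul_bdd hgm hg) (Integrable.of_bound hgm 1 hg)).symm
  rw [hdiff, ← Real.norm_eq_abs]
  refine norm_integral_le_of_norm_le hf1.abs (hg.mono fun x hx => ?_)
  rw [norm_mul, Real.norm_eq_abs]
  exact mul_le_of_le_one_right (abs_nonneg _) hx

end

/-- Total-variation-type bound for Metropolis–Hastings transition probabilities built
from two absolutely continuous proposal distributions `q₁ ≪ q₂`:
`|Q₁(A) − Q₂(A)| ≤ 2 ∫ |dq₁/dq₂ − 1| dq₂`. -/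
theorem mh_kernel_difference_bound
    {X : Type*} [MeasurableSpace X]
    (u : X) (a : X → ℝ) (ha : Measurable a) (ha01 : ∀ v, a v ∈ Set.Icc (0 : ℝ) 1)
    (q₁ q₂ : Measure X) [IsProbabilityMeasure q₁] [IsProbabilityMeasure q₂]
    (hac : q₁ ≪ q₂)
    (Q : Measure X → Set X → ℝ)
    (hQ : ∀ q A, Q q A = (∫ v in A, a v ∂q) +
      Set.indicator A (fun _ => 1 - ∫ v, a v ∂q) u) :
    ∀ A : Set X, MeasurableSet A →
      |Q q₁ A - Q q₂ A| ≤ 2 * ∫ v, |(q₁.rnDeriv q₂ v).toReal - 1| ∂q₂ := by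
  intro A hA
  set I := ∫ v, |(q₁.rnDeriv q₂ v).toReal - 1| ∂q₂
  have ha1 : ∀ v, ‖a v‖ ≤ 1 := fun v => by
    rw [Real.norm_eq_abs, abs_of_nonneg (ha01 v).1]; exact (ha01 v).2
  have hacceptance : |∫ v in A, a v ∂q₁ - ∫ v in A, a v ∂q₂| ≤ I := by
    simp only [← integral_indicator hA]
    exact abs_integral_sub_integral_le_integral_abs_rnDeriv_sub_one hac
      (ha.indicator hA).aestronglyMeasurable
      (.of_forall fun v => (norm_indicator_le_norm_self a v).trans (ha1 v))
  have hrejection : |A.indicator (fun _ => 1 - ∫ v, a v ∂q₁) u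
      - A.indicator (fun _ => 1 - ∫ v, a v ∂q₂) u| ≤ I := by
    rw [← Pi.sub_apply (A.indicator _), ← Set.indicator_sub', ← Real.norm_eq_abs]
    refine (norm_indicator_le_norm_self _ u).trans ?_
    rw [Pi.sub_apply, Real.norm_eq_abs, sub_sub_sub_cancel_left, abs_sub_comm]
    exact abs_integral_sub_integral_le_integral_abs_rnDeriv_sub_one hac
      ha.aestronglyMeasurable (.of_forall ha1)
  rw [hQ, hQ, add_sub_add_comm, two_mul]
  exact (abs_add_le _ _).trans (add_le_add hacceptance hrejection)
end

section
/- For every R > 0 there exists a constant c > 0 (depending only on R) such that the following holds: for every positive integer d, every n ≥ 2, every δ ≥ 0, and all points x₁, …, x_{n+1} ∈ ℝ^d with ‖x_i‖ ≤ R for all i, the regularized empirical covariance matrices Σ_n = (1/(n−1)) ∑_{i=1}^{n} (x_i − x̄_n)(x_i − x̄_n)ᵀ + δ I (where x̄_n = (1/n) ∑_{i=1}^{n} x_i) satisfy ‖Σ_{n+1} − Σ_n‖ ≤ c/n, where ‖·‖ is the operator norm. -/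
/-!
Write `S_n = ∑_{i<n} (x_i − x̄_n)(x_i − x̄_n)ᵀ` for the scatter matrix, so `Σ_n = S_n/(n−1) + δ I`.
The parallel-axis identity gives Welford's update `S_{n+1} = S_n + (n/(n+1)) v vᵀ` with
`v = x_n − x̄_n`, hence `Σ_{n+1} − Σ_n = v vᵀ/(n+1) − S_n/(n(n−1))`. All centred points have norm
at most `2R` and `‖y yᵀ‖ = ‖y‖²`, so `‖v vᵀ‖ ≤ 4R²` and `‖S_n‖ ≤ 4nR²`, and
`4R²/(n+1) + 4R²/(n−1) ≤ 12R²/n` for `n ≥ 2`.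
-/
open Finset Matrix

/-- The Euclidean norm on `ℝ^d`. -/
noncomputable def eucNorm {d : ℕ} (y : Fin d → ℝ) : ℝ :=
  Real.sqrt (∑ j, y j ^ 2)

/-- The empirical mean of the first `n` points. -/
noncomputable def empMean (d n : ℕ) (x : ℕ → Fin d → ℝ) : Fin d → ℝ :=
  (n : ℝ)⁻¹ • ∑ i ∈ Finset.range n, x i

/-- The regularized empirical covariance
`Σ_n = (1/(n−1)) ∑_{i=1}^n (x_i − x̄_n)(x_i − x̄_n)ᵀ + δ I`. -/
noncomputable def empCov (d n : ℕ) (δ : ℝ) (x : ℕ → Fin d → ℝ) :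
    Matrix (Fin d) (Fin d) ℝ :=
  ((n : ℝ) - 1)⁻¹ •
      (∑ i ∈ Finset.range n,
        Matrix.vecMulVec (x i - empMean d n x) (x i - empMean d n x)) +
    δ • 1

/-- The `ℓ²` operator norm of a real matrix. -/
noncomputable def opNorm {d : ℕ} (M : Matrix (Fin d) (Fin d) ℝ) : ℝ :=
  ‖Matrix.toEuclideanCLM (𝕜 := ℝ) (n := Fin d) M‖

open scoped Matrix.Norms.L2Operator

section OuterProduct

variable {ι m n α : Type*} [NonUnitalNonAssocSemiring α]

theorem Matrix.sum_vecMulVec (s : Finset ι) (w : ι → m → α) (v : n → α) :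
    ∑ i ∈ s, vecMulVec (w i) v = vecMulVec (∑ i ∈ s, w i) v := by
  ext; simp [vecMulVec_apply, Matrix.sum_apply, Finset.sum_mul]

theorem Matrix.vecMulVec_sum (s : Finset ι) (w : m → α) (v : ι → n → α) :
    ∑ i ∈ s, vecMulVec w (v i) = vecMulVec w (∑ i ∈ s, v i) := by
  ext; simp [vecMulVec_apply, Matrix.sum_apply, Finset.mul_sum]

end OuterProduct

variable {d : ℕ}

lemma eucNorm_eq_norm_toLp (y : Fin d → ℝ) : eucNorm y = ‖WithLp.toLp 2 y‖ := by
  simp [eucNorm, EuclideanSpace.norm_eq]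

lemma eucNorm_sub_le (y z : Fin d → ℝ) : eucNorm (y - z) ≤ eucNorm y + eucNorm z := by
  simp only [eucNorm_eq_norm_toLp, WithLp.toLp_sub]
  exact norm_sub_le _ _

lemma norm_vecMulVec (y z : Fin d → ℝ) : ‖vecMulVec y z‖ = eucNorm y * eucNorm z := by
  have h := InnerProductSpace.symm_toEuclideanLin_rankOne (𝕜 := ℝ) (WithLp.toLp 2 y)
    (WithLp.toLp 2 z)
  simp only [star_trivial] at h
  rw [← h, l2_opNorm_def, LinearEquiv.trans_apply, LinearEquiv.apply_symm_apply,
    eucNorm_eq_norm_toLp, eucNorm_eq_norm_toLp]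
  exact InnerProductSpace.norm_rankOne _ _

lemma sum_range_eq_smul_empMean (n : ℕ) (x : ℕ → Fin d → ℝ) :
    ∑ i ∈ range n, x i = (n : ℝ) • empMean d n x := by
  rcases eq_or_ne n 0 with rfl | hn
  · simp
  · rw [empMean, smul_smul, mul_inv_cancel₀ (Nat.cast_ne_zero.2 hn), one_smul]

lemma sum_sub_empMean (n : ℕ) (x : ℕ → Fin d → ℝ) :
    ∑ i ∈ range n, (x i - empMean d n x) = 0 := by
  rw [sum_sub_distrib, sum_range_eq_smul_empMean, sum_const, card_range, Nat.cast_smul_eq_nsmul,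
    sub_self]

lemma empMean_succ_sub_empMean (n : ℕ) (x : ℕ → Fin d → ℝ) :
    empMean d (n + 1) x - empMean d n x = ((n : ℝ) + 1)⁻¹ • (x n - empMean d n x) := by
  rw [empMean, sum_range_succ, sum_range_eq_smul_empMean, Nat.cast_succ]
  match_scalars <;> field_simp; ring

lemma eucNorm_empMean_le {n : ℕ} (hn : n ≠ 0) {R : ℝ} {x : ℕ → Fin d → ℝ}
    (hx : ∀ i ∈ range n, eucNorm (x i) ≤ R) : eucNorm (empMean d n x) ≤ R := by
  have hn' : (0 : ℝ) < n := by positivity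
  rw [eucNorm_eq_norm_toLp, empMean, WithLp.toLp_smul, WithLp.toLp_sum, norm_smul,
    Real.norm_of_nonneg (by positivity)]
  calc (n : ℝ)⁻¹ * ‖∑ i ∈ range n, WithLp.toLp 2 (x i)‖
      ≤ (n : ℝ)⁻¹ * ∑ i ∈ range n, R := by
        gcongr
        exact norm_sum_le_of_le _ fun i hi => (eucNorm_eq_norm_toLp (x i)).symm.trans_le (hx i hi)
    _ = R := by rw [sum_const, card_range, nsmul_eq_mul]; field_simp

noncomputable def scatter (d n : ℕ) (x : ℕ → Fin d → ℝ) : Matrix (Fin d) (Fin d) ℝ :=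
  ∑ i ∈ range n, vecMulVec (x i - empMean d n x) (x i - empMean d n x)

lemma empCov_eq_scatter (n : ℕ) (δ : ℝ) (x : ℕ → Fin d → ℝ) :
    empCov d n δ x = ((n : ℝ) - 1)⁻¹ • scatter d n x + δ • 1 := rfl

/-- Parallel-axis (Steiner) identity: the cross terms vanish because the centred points sum
to zero. -/
lemma sum_vecMulVec_sub_eq_scatter_add (n : ℕ) (x : ℕ → Fin d → ℝ) (a : Fin d → ℝ) :
    ∑ i ∈ range n, vecMulVec (x i - a) (x i - a)
      = scatter d n x + (n : ℝ) • vecMulVec (empMean d n x - a) (empMean d n x - a) := by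
  have hsplit : ∀ i, x i - a = (x i - empMean d n x) + (empMean d n x - a) := fun i => by abel
  simp only [hsplit, add_vecMulVec, vecMulVec_add, sum_add_distrib, sum_vecMulVec, vecMulVec_sum,
    sum_sub_empMean, zero_vecMulVec, vecMulVec_zero, sum_const, card_range, Nat.cast_smul_eq_nsmul]
  rw [scatter]
  abel

lemma scatter_succ (n : ℕ) (x : ℕ → Fin d → ℝ) :
    scatter d (n + 1) x = scatter d n x
      + ((n : ℝ) / (n + 1)) • vecMulVec (x n - empMean d n x) (x n - empMean d n x) := by
  set v := x n - empMean d n x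
  have hmean := empMean_succ_sub_empMean n x
  have hlast : x n - empMean d (n + 1) x = ((n : ℝ) / (n + 1)) • v := by
    rw [← sub_sub_sub_cancel_right (x n) _ (empMean d n x), hmean]
    match_scalars <;> field_simp <;> ring
  rw [scatter, sum_range_succ, sum_vecMulVec_sub_eq_scatter_add, ← neg_sub, hmean, hlast]
  simp only [neg_vecMulVec, vecMulVec_neg, smul_vecMulVec, vecMulVec_smul]
  match_scalars <;> field_simp; ring

lemma empCov_succ_sub_empCov {n : ℕ} (hn : 2 ≤ n) (δ : ℝ) (x : ℕ → Fin d → ℝ) :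
    empCov d (n + 1) δ x - empCov d n δ x
      = ((n : ℝ) + 1)⁻¹ • vecMulVec (x n - empMean d n x) (x n - empMean d n x)
        - ((n : ℝ) * (n - 1))⁻¹ • scatter d n x := by
  have hn' : (2 : ℝ) ≤ n := by exact_mod_cast hn
  have : (n : ℝ) ≠ 0 := by positivity
  have : (n : ℝ) - 1 ≠ 0 := by linarith
  rw [empCov_eq_scatter, empCov_eq_scatter, scatter_succ, Nat.cast_succ, add_sub_cancel_right]
  match_scalars <;> field_simp <;> ring

lemma norm_vecMulVec_self_le {y : Fin d → ℝ} {r : ℝ} (hy : eucNorm y ≤ r) :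
    ‖vecMulVec y y‖ ≤ r ^ 2 := by
  rw [norm_vecMulVec, ← sq]
  exact pow_le_pow_left₀ (Real.sqrt_nonneg _) hy 2

lemma norm_scatter_le {n : ℕ} {r : ℝ} {x : ℕ → Fin d → ℝ}
    (hx : ∀ i ∈ range n, eucNorm (x i - empMean d n x) ≤ r) : ‖scatter d n x‖ ≤ n * r ^ 2 := by
  calc ‖scatter d n x‖ ≤ ∑ i ∈ range n, r ^ 2 :=
        norm_sum_le_of_le _ fun i hi => norm_vecMulVec_self_le (hx i hi)
    _ = n * r ^ 2 := by rw [sum_const, card_range, nsmul_eq_mul]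

/-- For points of norm at most `R`, consecutive regularized empirical covariance
matrices satisfy `‖Σ_{n+1} − Σ_n‖ ≤ c/n`, with `c` depending only on `R`. -/
theorem empirical_cov_increment_bound (R : ℝ) (hR : 0 < R) :
    ∃ c > 0, ∀ (d n : ℕ), 2 ≤ n → ∀ δ : ℝ, 0 ≤ δ →
      ∀ x : ℕ → Fin d → ℝ, (∀ i ∈ Finset.range (n + 1), eucNorm (x i) ≤ R) →
        opNorm (empCov d (n + 1) δ x - empCov d n δ x) ≤ c / n := by
  refine ⟨12 * R ^ 2, by positivity, fun d n hn δ _ x hx => ?_⟩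
  have hn' : (2 : ℝ) ≤ n := by exact_mod_cast hn
  have hmean : eucNorm (empMean d n x) ≤ R :=
    eucNorm_empMean_le (by omega) fun i hi => hx i (range_mono n.le_succ hi)
  have hcentered : ∀ i ∈ range (n + 1), eucNorm (x i - empMean d n x) ≤ 2 * R := fun i hi => by
    linarith [eucNorm_sub_le (x i) (empMean d n x), hx i hi]
  have hlast : ‖vecMulVec (x n - empMean d n x) (x n - empMean d n x)‖ ≤ (2 * R) ^ 2 :=
    norm_vecMulVec_self_le (hcentered n (self_mem_range_succ n))
  have hscatter : ‖scatter d n x‖ ≤ n * (2 * R) ^ 2 :=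
    norm_scatter_le fun i hi => hcentered i (range_mono n.le_succ hi)
  rw [opNorm, l2_opNorm_toEuclideanCLM, empCov_succ_sub_empCov hn]
  calc _ ≤ ((n : ℝ) + 1)⁻¹ * (2 * R) ^ 2 + ((n : ℝ) * (n - 1))⁻¹ * (n * (2 * R) ^ 2) := by
        have hcoeff : 0 ≤ ((n : ℝ) * (n - 1))⁻¹ := inv_nonneg.2 (by nlinarith)
        refine (norm_sub_le _ _).trans (add_le_add ?_ ?_)
        · rw [norm_smul, Real.norm_of_nonneg (by positivity)]; gcongr
        · rw [norm_smul, Real.norm_of_nonneg hcoeff]; gcongr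
    _ ≤ 12 * R ^ 2 / n := by
        have : (n : ℝ) - 1 ≠ 0 := by linarith
        field_simp
        rw [div_le_iff₀ (by linarith)]
        nlinarith
end
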